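/- Suppose elements of a time slab are totally ordered so that whenever element e' for component i' covers element e for component i (i.e., the time interval of e is contained in that of e'), then e' precedes e in the order. If elements are processed in this order and elast[i'] records the most recently processed element of component i', then at the moment element e is processed, for every component i' whose current covering interval contains the interval of e, elast[i'] is exactly the element of component i' whose interval contains the interval of e. -/
import Mathlib


/-- Elements of a time slab are processed in their index order. Suppose
every element interval `(a e, b e]` is nonempty, elements of the same component are
processed in forward time order (`e₁ < e₂` of one component implies `b e₁ ≤ a e₂`), and
any element whose interval lies entirely before another's is processed first (the sweep
property). Then when element `e` is processed, for every component `i'` having an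
already-processed element `e'` whose interval covers that of `e`, the most recently
processed element of component `i'` is exactly `e'`: every earlier element `e''` of
component `i'` satisfies `e'' ≤ e'`. Hence `elast[i'] = e'`. -/
theorem stmt_15 (Elem : ℕ) (Ncomp : ℕ)
    (a b : Fin Elem → ℝ) (comp : Fin Elem → Fin Ncomp)
    (hnonempty : ∀ e, a e < b e)
    (hcomp_order : ∀ e₁ e₂ : Fin Elem, comp e₁ = comp e₂ → e₁ < e₂ → b e₁ ≤ a e₂)
    (hsweep : ∀ e₁ e₂ : Fin Elem, b e₁ ≤ a e₂ → e₁ < e₂) :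
    ∀ e e' : Fin Elem, e' < e →
      Set.Ioc (a e) (b e) ⊆ Set.Ioc (a e') (b e') →
      ∀ e'' : Fin Elem, e'' < e → comp e'' = comp e' → e'' ≤ e' := by
  intro e e' he'e hsub e'' he''e hcomp
  by_contra hlt
  push_neg at hlt
  have h1 : b e' ≤ a e'' := hcomp_order e' e'' hcomp.symm hlt
  have hbe : b e ∈ Set.Ioc (a e') (b e') :=
    hsub ⟨hnonempty e, le_refl _⟩
  have h2 : b e ≤ b e' := hbe.2
  have h3 : a e'' < b e := by
    by_contra h
    push_neg at h
    exact absurd (hsweep e e'' h) (not_lt.mpr he''e.le)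
  linarith
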